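/- For all real numbers r < s and every continuous function σ : [r,s] → ℝ with σ(u) > 0 for all u ∈ [r,s], the heteroskedasticity measures satisfy the chain of inequalities 0 < ρ_{r,s}^{3/2} ≤ κ_{r,s} ≤ ρ_{r,s}^{1/2} ≤ 1. -/

import Mathlib

open MeasureTheory

/-- Heteroskedasticity measure `ρ_{r,s}`. -/
noncomputable def rhoM (σ : ℝ → ℝ) (r s : ℝ) : ℝ :=
  (∫ u in r..s, σ u ^ 2) /
    ((s - r) ^ ((1 : ℝ) / 2) * (∫ u in r..s, σ u ^ 4) ^ ((1 : ℝ) / 2))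

/-- Heteroskedasticity measure `κ_{r,s}`. -/
noncomputable def kappaM (σ : ℝ → ℝ) (r s : ℝ) : ℝ :=
  (∫ u in r..s, σ u ^ 3) /
    ((s - r) ^ ((1 : ℝ) / 4) * (∫ u in r..s, σ u ^ 4) ^ ((3 : ℝ) / 4))

section aux

lemma aux_memLp {r s : ℝ} {g : ℝ → ℝ} (hg : ContinuousOn g (Set.Icc r s))
    (p : ENNReal) : MemLp g p (volume.restrict (Set.Ioc r s)) := by
  haveI : IsFiniteMeasure (volume.restrict (Set.Ioc r s)) := by
    constructor
    rw [Measure.restrict_apply_univ]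
    exact measure_Ioc_lt_top
  obtain ⟨M, hM⟩ := isCompact_Icc.exists_bound_of_continuousOn hg
  have hmeas : AEStronglyMeasurable g (volume.restrict (Set.Ioc r s)) :=
    (hg.aestronglyMeasurable measurableSet_Icc).mono_measure
      (Measure.restrict_mono Set.Ioc_subset_Icc_self le_rfl)
  refine (memLp_top_of_bound hmeas M ?_).mono_exponent le_top
  refine (ae_restrict_iff' measurableSet_Ioc).2 (Filter.Eventually.of_forall fun x hx => ?_)
  exact hM x (Set.Ioc_subset_Icc_self hx)

end aux

/-- Inequality chain `0 < ρ^{3/2} ≤ κ ≤ ρ^{1/2} ≤ 1`. -/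
theorem stmt0 (r s : ℝ) (hrs : r < s) (σ : ℝ → ℝ)
    (hcont : ContinuousOn σ (Set.Icc r s))
    (hpos : ∀ u ∈ Set.Icc r s, 0 < σ u) :
    0 < rhoM σ r s ^ ((3 : ℝ) / 2) ∧
      rhoM σ r s ^ ((3 : ℝ) / 2) ≤ kappaM σ r s ∧
      kappaM σ r s ≤ rhoM σ r s ^ ((1 : ℝ) / 2) ∧
      rhoM σ r s ^ ((1 : ℝ) / 2) ≤ 1 := by
  have hle : r ≤ s := hrs.le
  set μ := volume.restrict (Set.Ioc r s) with hμ
  set L : ℝ := s - r with hLdef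
  have hL : 0 < L := by simp [hLdef]; linarith
  -- continuity of powers
  have hc2 : ContinuousOn (fun u => σ u ^ 2) (Set.Icc r s) := hcont.pow 2
  have hc3 : ContinuousOn (fun u => σ u ^ 3) (Set.Icc r s) := hcont.pow 3
  have hc4 : ContinuousOn (fun u => σ u ^ 4) (Set.Icc r s) := hcont.pow 4
  -- positivity of integrals
  have hpow_pos : ∀ (k : ℕ), 0 < ∫ u in r..s, σ u ^ k := by
    intro k
    apply intervalIntegral.intervalIntegral_pos_of_pos_on
    · exact ((hcont.pow k).mono (by rw [Set.uIcc_of_le hle])).intervalIntegrable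
    · intro x hx
      exact pow_pos (hpos x (Set.mem_Icc_of_Ioo hx)) k
    · exact hrs
  set B : ℝ := ∫ u in r..s, σ u ^ 2 with hBdef
  set C : ℝ := ∫ u in r..s, σ u ^ 3 with hCdef
  set D : ℝ := ∫ u in r..s, σ u ^ 4 with hDdef
  have hB : 0 < B := hpow_pos 2
  have hC : 0 < C := hpow_pos 3
  have hD : 0 < D := hpow_pos 4
  -- set-integral versions
  have hBset : B = ∫ u in Set.Ioc r s, σ u ^ 2 := intervalIntegral.integral_of_le hle
  have hCset : C = ∫ u in Set.Ioc r s, σ u ^ 3 := intervalIntegral.integral_of_le hle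
  have hDset : D = ∫ u in Set.Ioc r s, σ u ^ 4 := intervalIntegral.integral_of_le hle
  have hμuniv : ∫ _ in Set.Ioc r s, (1 : ℝ) = L := by
    simp [Real.volume_Ioc, ENNReal.toReal_ofReal hL.le, hLdef, hle]
  have hσnn : ∀ᵐ x ∂μ, 0 ≤ σ x := by
    refine (ae_restrict_iff' measurableSet_Ioc).2 (Filter.Eventually.of_forall fun x hx => ?_)
    exact (hpos x (Set.Ioc_subset_Icc_self hx)).le
  have h22 : (2 : ℝ).HolderConjugate 2 := ⟨by norm_num, by norm_num, by norm_num⟩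
  have hone : ContinuousOn (fun _ : ℝ => (1 : ℝ)) (Set.Icc r s) := continuousOn_const
  have rpow2 : ∀ x : ℝ, x ^ (2 : ℝ) = x ^ 2 := fun x => by
    rw [show (2 : ℝ) = ((2 : ℕ) : ℝ) by norm_num, Real.rpow_natCast]
  -- Cauchy-Schwarz 1 : B ≤ L^(1/2) * D^(1/2)
  have h1 : B ≤ L ^ ((1:ℝ)/2) * D ^ ((1:ℝ)/2) := by
    have := integral_mul_le_Lp_mul_Lq_of_nonneg (μ := μ) h22
      (f := fun _ => (1:ℝ)) (g := fun u => σ u ^ 2)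
      (Filter.Eventually.of_forall fun x => zero_le_one)
      (Filter.Eventually.of_forall fun x => sq_nonneg _)
      (aux_memLp hone _) (aux_memLp hc2 _)
    simp only [one_mul, rpow2, Real.one_rpow, one_pow] at this
    calc B = ∫ u in Set.Ioc r s, σ u ^ 2 := hBset
      _ ≤ (∫ _ in Set.Ioc r s, (1:ℝ)) ^ ((1:ℝ)/2) *
          (∫ u in Set.Ioc r s, (σ u ^ 2) ^ 2) ^ ((1:ℝ)/2) := this
      _ = L ^ ((1:ℝ)/2) * D ^ ((1:ℝ)/2) := by
          rw [hμuniv, hDset]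
          congr 2
          apply integral_congr_ae
          exact Filter.Eventually.of_forall fun x => by ring
  -- Cauchy-Schwarz 2 : C ≤ B^(1/2) * D^(1/2)
  have h2 : C ≤ B ^ ((1:ℝ)/2) * D ^ ((1:ℝ)/2) := by
    have := integral_mul_le_Lp_mul_Lq_of_nonneg (μ := μ) h22
      (f := fun u => σ u) (g := fun u => σ u ^ 2)
      hσnn (Filter.Eventually.of_forall fun x => sq_nonneg _)
      (aux_memLp hcont _) (aux_memLp hc2 _)
    simp only [rpow2] at this
    calc C = ∫ u in Set.Ioc r s, σ u ^ 3 := hCset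
      _ = ∫ u in Set.Ioc r s, σ u * σ u ^ 2 := by
          apply integral_congr_ae; exact Filter.Eventually.of_forall fun x => by ring
      _ ≤ (∫ u in Set.Ioc r s, σ u ^ 2) ^ ((1:ℝ)/2) *
          (∫ u in Set.Ioc r s, (σ u ^ 2) ^ 2) ^ ((1:ℝ)/2) := this
      _ = B ^ ((1:ℝ)/2) * D ^ ((1:ℝ)/2) := by
          rw [← hBset, hDset]
          congr 2
          apply integral_congr_ae
          exact Filter.Eventually.of_forall fun x => by ring
  -- Hölder with p = 3, q = 3/2 : B ≤ L^(1/3) * C^(2/3)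
  have h3 : B ≤ L ^ ((1:ℝ)/3) * C ^ ((2:ℝ)/3) := by
    have hconj : (3 : ℝ).HolderConjugate (3/2) := ⟨by norm_num, by norm_num, by norm_num⟩
    have := integral_mul_le_Lp_mul_Lq_of_nonneg (μ := μ) hconj
      (f := fun _ => (1:ℝ)) (g := fun u => σ u ^ 2)
      (Filter.Eventually.of_forall fun x => zero_le_one)
      (Filter.Eventually.of_forall fun x => sq_nonneg _)
      (aux_memLp hone _) (aux_memLp hc2 _)
    simp only [one_mul, Real.one_rpow] at this
    have hcongr : ∫ u in Set.Ioc r s, ((σ u ^ 2) ^ ((3:ℝ)/2)) = C := by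
      rw [hCset]
      apply integral_congr_ae
      filter_upwards [hσnn] with x hx
      rw [← Real.rpow_natCast (σ x) 2, ← Real.rpow_mul hx, ← Real.rpow_natCast (σ x) 3]
      norm_num
    calc B = ∫ u in Set.Ioc r s, σ u ^ 2 := hBset
      _ ≤ (∫ _ in Set.Ioc r s, (1:ℝ)) ^ ((1:ℝ)/3) *
          (∫ u in Set.Ioc r s, ((σ u ^ 2) ^ ((3:ℝ)/2))) ^ (1/(3/2):ℝ) := this
      _ = L ^ ((1:ℝ)/3) * C ^ ((2:ℝ)/3) := by
          rw [hμuniv, hcongr]; norm_num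
  -- abbreviations
  have hden : 0 < L ^ ((1:ℝ)/2) * D ^ ((1:ℝ)/2) :=
    mul_pos (Real.rpow_pos_of_pos hL _) (Real.rpow_pos_of_pos hD _)
  have hrho_eq : rhoM σ r s = B / (L ^ ((1:ℝ)/2) * D ^ ((1:ℝ)/2)) := rfl
  have hkap_eq : kappaM σ r s = C / (L ^ ((1:ℝ)/4) * D ^ ((3:ℝ)/4)) := rfl
  have hrho_pos : 0 < rhoM σ r s := by rw [hrho_eq]; exact div_pos hB hden
  have hrho_le_one : rhoM σ r s ≤ 1 := by
    rw [hrho_eq]; exact (div_le_one hden).2 h1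
  -- rpow expansions of rho powers
  have hLmul : ∀ a b : ℝ, L ^ a * L ^ b = L ^ (a + b) := fun a b =>
    (Real.rpow_add hL a b).symm
  have hDmul : ∀ a b : ℝ, D ^ a * D ^ b = D ^ (a + b) := fun a b =>
    (Real.rpow_add hD a b).symm
  have hrho32 : rhoM σ r s ^ ((3:ℝ)/2) =
      B ^ ((3:ℝ)/2) / (L ^ ((3:ℝ)/4) * D ^ ((3:ℝ)/4)) := by
    rw [hrho_eq, Real.div_rpow hB.le hden.le,
      Real.mul_rpow (Real.rpow_pos_of_pos hL _).le (Real.rpow_pos_of_pos hD _).le,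
      ← Real.rpow_mul hL.le, ← Real.rpow_mul hD.le]
    norm_num
  have hrho12 : rhoM σ r s ^ ((1:ℝ)/2) =
      B ^ ((1:ℝ)/2) / (L ^ ((1:ℝ)/4) * D ^ ((1:ℝ)/4)) := by
    rw [hrho_eq, Real.div_rpow hB.le hden.le,
      Real.mul_rpow (Real.rpow_pos_of_pos hL _).le (Real.rpow_pos_of_pos hD _).le,
      ← Real.rpow_mul hL.le, ← Real.rpow_mul hD.le]
    norm_num
  refine ⟨Real.rpow_pos_of_pos hrho_pos _, ?_, ?_, ?_⟩
  · -- rho^(3/2) ≤ kappa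
    have key : B ^ ((3:ℝ)/2) ≤ L ^ ((1:ℝ)/2) * C := by
      calc B ^ ((3:ℝ)/2) ≤ (L ^ ((1:ℝ)/3) * C ^ ((2:ℝ)/3)) ^ ((3:ℝ)/2) :=
            Real.rpow_le_rpow hB.le h3 (by norm_num)
        _ = L ^ ((1:ℝ)/2) * C := by
            rw [Real.mul_rpow (Real.rpow_pos_of_pos hL _).le (Real.rpow_pos_of_pos hC _).le,
              ← Real.rpow_mul hL.le, ← Real.rpow_mul hC.le]
            norm_num
    rw [hrho32, hkap_eq]
    rw [div_le_div_iff₀ (mul_pos (Real.rpow_pos_of_pos hL _) (Real.rpow_pos_of_pos hD _))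
      (mul_pos (Real.rpow_pos_of_pos hL _) (Real.rpow_pos_of_pos hD _))]
    have e1 : L ^ ((1:ℝ)/2) * L ^ ((1:ℝ)/4) = L ^ ((3:ℝ)/4) := by
      rw [hLmul]; norm_num
    calc B ^ ((3:ℝ)/2) * (L ^ ((1:ℝ)/4) * D ^ ((3:ℝ)/4))
        ≤ (L ^ ((1:ℝ)/2) * C) * (L ^ ((1:ℝ)/4) * D ^ ((3:ℝ)/4)) := by
          apply mul_le_mul_of_nonneg_right key
          positivity
      _ = C * (L ^ ((3:ℝ)/4) * D ^ ((3:ℝ)/4)) := by rw [← e1]; ring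
  · -- kappa ≤ rho^(1/2)
    rw [hrho12, hkap_eq]
    rw [div_le_div_iff₀ (mul_pos (Real.rpow_pos_of_pos hL _) (Real.rpow_pos_of_pos hD _))
      (mul_pos (Real.rpow_pos_of_pos hL _) (Real.rpow_pos_of_pos hD _))]
    have e2 : D ^ ((1:ℝ)/2) * D ^ ((1:ℝ)/4) = D ^ ((3:ℝ)/4) := by
      rw [hDmul]; norm_num
    calc C * (L ^ ((1:ℝ)/4) * D ^ ((1:ℝ)/4))
        ≤ (B ^ ((1:ℝ)/2) * D ^ ((1:ℝ)/2)) * (L ^ ((1:ℝ)/4) * D ^ ((1:ℝ)/4)) := by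
          apply mul_le_mul_of_nonneg_right h2
          positivity
      _ = B ^ ((1:ℝ)/2) * (L ^ ((1:ℝ)/4) * D ^ ((3:ℝ)/4)) := by rw [← e2]; ring
  · exact Real.rpow_le_one hrho_pos.le hrho_le_one (by norm_num)
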